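/- Let (G, c) be a Max-2Lin_k instance with nonnegative edge weights x such that every inconsistent cycle of G has total weight at least 1, and suppose x_e < 1/2 for every edge e of G. If S is a set of vertices with d_x(u, v) ≤ 1/4 for every pair u, v ∈ S, then the induced subgraph G[S] contains no inconsistent cycle, and hence the instance restricted to G[S] is satisfiable. -/

import Mathlib

open SimpleGraph

/-- The weight of a walk: the sum of the weights of its edges, counted with multiplicity. -/
def walkWeight {V : Type*} {G : SimpleGraph V} (x : Sym2 V → ℝ) {u v : V}
    (p : G.Walk u v) : ℝ :=
  (p.edges.map x).sum

/-- The shortest-path distance between `u` and `v` induced by the edge weights `x`. -/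
noncomputable def wdist {V : Type*} (G : SimpleGraph V) (x : Sym2 V → ℝ) (u v : V) : ℝ :=
  sInf {r | ∃ p : G.Walk u v, walkWeight x p = r}

/-- The sum of the constants `c` along a walk: `c_{v_0 v_1} + c_{v_1 v_2} + ⋯ + c_{v_{l-1} v_l}`. -/
def walkSum {V : Type*} {k : ℕ} {G : SimpleGraph V} (c : V → V → ZMod k) {u v : V}
    (p : G.Walk u v) : ZMod k :=
  (p.darts.map (fun d => c d.fst d.snd)).sum

/-! Shortcutting a walk to a path (`Walk.bypass`) only cuts out backtracks, which have sum zero,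
and cycles, which weigh at least 1 when inconsistent; so every closed walk with nonzero sum weighs
at least 1, not just every inconsistent cycle.
Hence two walks between the same endpoints of total weight less than 1 have the same sum.
Fix in every connected component meeting `S` a root in `S`, and let `f a` be the sum along any
walk of weight less than `1/2` from the root to `a ∈ S`. For an edge `uv` inside `S`, nearly
shortest walks to `u` and `v` close up through `uv` to a closed walk of weight less than
`1/4 + 1/4 + x_uv + (1/2 - x_uv) = 1`, so `f v - f u = c u v`. A satisfying assignment forces
every closed walk in `G[S]` to have sum zero. -/

section WalkSum

variable {V : Type*} {k : ℕ} {G : SimpleGraph V} {c : V → V → ZMod k} {x : Sym2 V → ℝ}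

@[simp] lemma walkSum_nil (u : V) : walkSum c (Walk.nil : G.Walk u u) = 0 := rfl

@[simp] lemma walkSum_cons {u v w : V} (h : G.Adj u v) (p : G.Walk v w) :
    walkSum c (Walk.cons h p) = c u v + walkSum c p := by
  simp [walkSum]

lemma walkSum_append {u v w : V} (p : G.Walk u v) (q : G.Walk v w) :
    walkSum c (p.append q) = walkSum c p + walkSum c q := by
  simp [walkSum, Walk.darts_append]

@[simp] lemma walkSum_copy {u v u' v' : V} (p : G.Walk u v) (hu : u = u') (hv : v = v') :
    walkSum c (p.copy hu hv) = walkSum c p := by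
  subst hu hv
  rfl

lemma walkSum_reverse (hc : ∀ u v, G.Adj u v → c v u = -c u v) {u v : V} (p : G.Walk u v) :
    walkSum c p.reverse = -walkSum c p := by
  induction p with
  | nil => simp
  | cons h p ih =>
    rw [Walk.reverse_cons, walkSum_append, ih, walkSum_cons, walkSum_nil, walkSum_cons, hc _ _ h]
    ring

lemma walkSum_eq_sub_of_forall_adj {f : V → ZMod k} (hf : ∀ u v, G.Adj u v → f v - f u = c u v)
    {u v : V} (p : G.Walk u v) : walkSum c p = f v - f u := by
  induction p with
  | nil => simp
  | cons h p ih =>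
    rw [walkSum_cons, ih, ← hf _ _ h]
    ring

@[simp] lemma walkWeight_cons {u v w : V} (h : G.Adj u v) (p : G.Walk v w) :
    walkWeight x (Walk.cons h p) = x s(u, v) + walkWeight x p := by
  simp [walkWeight]

lemma walkWeight_append {u v w : V} (p : G.Walk u v) (q : G.Walk v w) :
    walkWeight x (p.append q) = walkWeight x p + walkWeight x q := by
  simp [walkWeight, Walk.edges_append]

lemma walkWeight_reverse {u v : V} (p : G.Walk u v) : walkWeight x p.reverse = walkWeight x p := by
  simp [walkWeight, Walk.edges_reverse, List.map_reverse, List.sum_reverse]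

lemma walkWeight_le_of_edges_sublist (hx0 : ∀ e ∈ G.edgeSet, 0 ≤ x e) {u v u' v' : V}
    {p : G.Walk u v} {q : G.Walk u' v'} (h : p.edges.Sublist q.edges) :
    walkWeight x p ≤ walkWeight x q :=
  (h.map x).sum_le_sum <| by
    simp only [List.mem_map]
    rintro _ ⟨e, he, rfl⟩
    exact hx0 e (q.edges_subset_edgeSet he)

lemma exists_walkWeight_lt_of_wdist_le {u v : V} (huv : G.Reachable u v) {r ε : ℝ}
    (hr : wdist G x u v ≤ r) (hε : 0 < ε) : ∃ p : G.Walk u v, walkWeight x p < r + ε := by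
  have hne : {r | ∃ p : G.Walk u v, walkWeight x p = r}.Nonempty := ⟨_, huv.some, rfl⟩
  obtain ⟨_, ⟨p, rfl⟩, hp⟩ := Real.lt_sInf_add_pos hne hε
  exact ⟨p, by unfold wdist at hr; linarith⟩

end WalkSum

section HeavyCycles

variable {V : Type*} {k : ℕ} {G : SimpleGraph V} {c : V → V → ZMod k} {x : Sym2 V → ℝ}

theorem one_le_walkWeight_of_walkSum_ne_walkSum_bypass [DecidableEq V]
    (hc : ∀ u v, G.Adj u v → c v u = -c u v) (hx0 : ∀ e ∈ G.edgeSet, 0 ≤ x e)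
    (hincons : ∀ (v : V) (C : G.Walk v v), C.IsCycle → walkSum c C ≠ 0 → 1 ≤ walkWeight x C)
    {u v : V} (p : G.Walk u v) (hp : walkSum c p ≠ walkSum c p.bypass) : 1 ≤ walkWeight x p := by
  induction p with
  | nil => exact absurd rfl hp
  | @cons u w v h p ih =>
    have hxuw : 0 ≤ x s(u, w) := hx0 _ h
    by_cases hsum : walkSum c p = walkSum c p.bypass
    swap
    · rw [walkWeight_cons]
      linarith [ih hsum]
    rw [Walk.bypass] at hp
    split_ifs at hp with hu
    · set q := p.bypass
      have hq : q.IsPath := p.bypass_isPath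
      have hsplit := congrArg (walkSum c) (q.take_spec hu)
      rw [walkSum_append] at hsplit
      set C : G.Walk u u := Walk.cons h (q.takeUntil u hu)
      have hC : walkSum c C ≠ 0 := by
        intro h0
        apply hp
        rw [walkSum_cons, hsum, ← hsplit]
        simp only [C, walkSum_cons] at h0
        linear_combination h0
      have hCcycle : C.IsCycle := by
        refine (Walk.cons_isCycle_iff _ h).mpr ⟨hq.takeUntil hu, fun he => hC ?_⟩
        simp only [C]
        rw [(hq.takeUntil hu).eq_adj_toWalk_of_mem_edges (Sym2.eq_swap ▸ he)]
        simp [hc _ _ h]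
      calc 1 ≤ walkWeight x C := hincons u C hCcycle hC
        _ ≤ walkWeight x (Walk.cons h p) := by
          refine walkWeight_le_of_edges_sublist hx0 ?_
          simp only [C, Walk.edges_cons]
          exact ((q.isSubwalk_takeUntil hu).edges_isInfix.sublist.trans
            p.edges_bypass_sublist_edges).cons_cons _
    · rw [walkSum_cons, walkSum_cons, hsum] at hp
      exact absurd rfl hp

theorem walkSum_eq_zero_of_walkWeight_lt_one
    (hc : ∀ u v, G.Adj u v → c v u = -c u v) (hx0 : ∀ e ∈ G.edgeSet, 0 ≤ x e)
    (hincons : ∀ (v : V) (C : G.Walk v v), C.IsCycle → walkSum c C ≠ 0 → 1 ≤ walkWeight x C)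
    {v : V} (p : G.Walk v v) (hp : walkWeight x p < 1) : walkSum c p = 0 := by
  classical
  by_contra hne
  have hbypass : p.bypass = Walk.nil := (Walk.isPath_iff_nil.mp p.bypass_isPath).eq_nil
  refine hp.not_ge (one_le_walkWeight_of_walkSum_ne_walkSum_bypass hc hx0 hincons p ?_)
  rwa [hbypass, walkSum_nil]

theorem walkSum_eq_of_walkWeight_add_lt_one
    (hc : ∀ u v, G.Adj u v → c v u = -c u v) (hx0 : ∀ e ∈ G.edgeSet, 0 ≤ x e)
    (hincons : ∀ (v : V) (C : G.Walk v v), C.IsCycle → walkSum c C ≠ 0 → 1 ≤ walkWeight x C)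
    {u v : V} (p q : G.Walk u v) (hpq : walkWeight x p + walkWeight x q < 1) :
    walkSum c p = walkSum c q := by
  have h := walkSum_eq_zero_of_walkWeight_lt_one hc hx0 hincons (p.append q.reverse)
    (by rwa [walkWeight_append, walkWeight_reverse])
  rw [walkSum_append, walkSum_reverse hc] at h
  exact add_neg_eq_zero.mp h

theorem walkSum_add_eq_of_adj
    (hc : ∀ u v, G.Adj u v → c v u = -c u v) (hx0 : ∀ e ∈ G.edgeSet, 0 ≤ x e)
    (hincons : ∀ (v : V) (C : G.Walk v v), C.IsCycle → walkSum c C ≠ 0 → 1 ≤ walkWeight x C)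
    {r u v : V} (hu : wdist G x r u ≤ 1 / 4) (hv : wdist G x r v ≤ 1 / 4)
    (huv : G.Adj u v) (hxuv : x s(u, v) < 1 / 2) (P : G.Walk r u) (Q : G.Walk r v)
    (hP : walkWeight x P < 1 / 2) (hQ : walkWeight x Q < 1 / 2) :
    walkSum c P + c u v = walkSum c Q := by
  have hxuv0 : 0 ≤ x s(u, v) := hx0 _ huv
  have hδ : 0 < (1 / 2 - x s(u, v)) / 2 := by linarith
  obtain ⟨P', hP'⟩ := exists_walkWeight_lt_of_wdist_le ⟨P⟩ hu hδ
  obtain ⟨Q', hQ'⟩ := exists_walkWeight_lt_of_wdist_le ⟨Q⟩ hv hδ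
  have hPP' := walkSum_eq_of_walkWeight_add_lt_one hc hx0 hincons P P' (by linarith)
  have hQQ' := walkSum_eq_of_walkWeight_add_lt_one hc hx0 hincons Q Q' (by linarith)
  have hclosed := walkSum_eq_zero_of_walkWeight_lt_one hc hx0 hincons
    (P'.append (Walk.cons huv Q'.reverse))
    (by rw [walkWeight_append, walkWeight_cons, walkWeight_reverse]; linarith)
  rw [walkSum_append, walkSum_cons, walkSum_reverse hc] at hclosed
  rw [hPP', hQQ']
  linear_combination hclosed

theorem exists_potential_of_wdist_le
    (hc : ∀ u v, G.Adj u v → c v u = -c u v) (hx : ∀ e ∈ G.edgeSet, 0 ≤ x e ∧ x e < 1 / 2)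
    (hincons : ∀ (v : V) (C : G.Walk v v), C.IsCycle → walkSum c C ≠ 0 → 1 ≤ walkWeight x C)
    (S : Set V) (hS : ∀ u ∈ S, ∀ v ∈ S, wdist G x u v ≤ 1 / 4) :
    ∃ f : V → ZMod k, ∀ u v : V, u ∈ S → v ∈ S → G.Adj u v → f v - f u = c u v := by
  classical
  have hx0 e he := (hx e he).1
  -- `wdist` is the junk value `sInf ∅ = 0` across components, so one root per component is needed.
  have hroot_exists (C : G.ConnectedComponent) : ∃ r : V,
      (∃ s ∈ S, G.connectedComponentMk s = C) → r ∈ S ∧ G.connectedComponentMk r = C := by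
    by_cases hC : ∃ s ∈ S, G.connectedComponentMk s = C
    · obtain ⟨s, hs, hsC⟩ := hC
      exact ⟨s, fun _ => ⟨hs, hsC⟩⟩
    · exact ⟨C.out, fun h => absurd h hC⟩
  choose root hroot_spec using hroot_exists
  have hroot a (ha : a ∈ S) :
      root (G.connectedComponentMk a) ∈ S ∧ G.Reachable (root (G.connectedComponentMk a)) a := by
    obtain ⟨hmem, hcomp⟩ := hroot_spec _ ⟨a, ha, rfl⟩
    exact ⟨hmem, ConnectedComponent.exact hcomp⟩
  have hwalk a (ha : a ∈ S) :
      ∃ P : G.Walk (root (G.connectedComponentMk a)) a, walkWeight x P < 1 / 2 := by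
    obtain ⟨P, hP⟩ := exists_walkWeight_lt_of_wdist_le (hroot a ha).2
      (hS _ (hroot a ha).1 a ha) (by norm_num : (0 : ℝ) < 1 / 4)
    exact ⟨P, by linarith⟩
  choose P hP using hwalk
  refine ⟨fun a => if ha : a ∈ S then walkSum c (P a ha) else 0, fun u v hu hv huv => ?_⟩
  have hroot_eq : root (G.connectedComponentMk v) = root (G.connectedComponentMk u) := by
    rw [ConnectedComponent.sound huv.reachable]
  have hstep := walkSum_add_eq_of_adj hc hx0 hincons (hS _ (hroot u hu).1 u hu)
    (hS _ (hroot u hu).1 v hv) huv (hx _ huv).2 (P u hu) ((P v hv).copy hroot_eq rfl) (hP u hu)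
    (by simpa [walkWeight] using hP v hv)
  rw [walkSum_copy] at hstep
  simp only [dif_pos hu, dif_pos hv, ← hstep]
  ring

end HeavyCycles

theorem stmt11_general {V : Type*} {k : ℕ} (G : SimpleGraph V)
    (c : V → V → ZMod k) (hc : ∀ u v, G.Adj u v → c v u = -c u v)
    (x : Sym2 V → ℝ)
    (hx : ∀ e ∈ G.edgeSet, 0 ≤ x e ∧ x e < 1 / 2)
    (hincons : ∀ (v : V) (C : G.Walk v v), C.IsCycle → walkSum c C ≠ 0 →
      1 ≤ walkWeight x C)
    (S : Set V) (hS : ∀ u ∈ S, ∀ v ∈ S, wdist G x u v ≤ 1 / 4) :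
    (∀ (v : S) (C : (G.induce S).Walk v v), C.IsCycle →
        walkSum (fun a b : S => c a b) C = 0) ∧
      ∃ f : V → ZMod k, ∀ u v : V, u ∈ S → v ∈ S → G.Adj u v → f v - f u = c u v := by
  obtain ⟨f, hf⟩ := exists_potential_of_wdist_le hc hx hincons S hS
  refine ⟨fun v C _ => ?_, f, hf⟩
  rw [walkSum_eq_sub_of_forall_adj (f := fun a : S => f a) (fun a b hab => hf a b a.2 b.2 hab),
    sub_self]

/-- If every inconsistent cycle of a `Max-2Lin_k` instance has total weight at least 1,
`x_e < 1/2` for every edge, and `S` is a set of vertices with pairwise distances at most `1/4`,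
then `G[S]` contains no inconsistent cycle and the instance restricted to `G[S]` is
satisfiable. -/
theorem stmt11 {V : Type*} [Fintype V] {k : ℕ} (hk : 1 ≤ k) (G : SimpleGraph V)
    (c : V → V → ZMod k) (hc : ∀ u v, G.Adj u v → c v u = -c u v)
    (x : Sym2 V → ℝ)
    (hx : ∀ e ∈ G.edgeSet, 0 ≤ x e ∧ x e < 1 / 2)
    (hincons : ∀ (v : V) (C : G.Walk v v), C.IsCycle → walkSum c C ≠ 0 →
      1 ≤ walkWeight x C)
    (S : Set V) (hS : ∀ u ∈ S, ∀ v ∈ S, wdist G x u v ≤ 1 / 4) :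
    (∀ (v : S) (C : (G.induce S).Walk v v), C.IsCycle →
        walkSum (fun a b : S => c a b) C = 0) ∧
      ∃ f : V → ZMod k, ∀ u v : V, u ∈ S → v ∈ S → G.Adj u v → f v - f u = c u v :=
  stmt11_general G c hc x hx hincons S hS
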